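/- Every element of the Apéry set of S belongs to Γ, where Γ = {Σ_{i=2}^ν λ_i g_i : 0 ≤ λ_i ≤ γ_i}. In other words, Ap(S) ⊆ Γ. -/

import Mathlib

open Finset

/-- `S` is a numerical semigroup: a submonoid of `(ℕ, +)` with finite complement. -/
def IsNumSgp (S : Set ℕ) : Prop :=
  0 ∈ S ∧ (∀ a ∈ S, ∀ b ∈ S, a + b ∈ S) ∧ (Sᶜ : Set ℕ).Finite

/-- `s` belongs to the Apéry set of `S` with respect to `m`:
`s ∈ S` and `s - m ∉ S` (i.e. no `u ∈ S` with `u + m = s`). -/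
def InApery (S : Set ℕ) (m s : ℕ) : Prop :=
  s ∈ S ∧ ∀ u ∈ S, u + m ≠ s

def AperySet (S : Set ℕ) (m : ℕ) : Set ℕ := {s | InApery S m s}

/-- `ordS S s` is the largest `h` such that `s` is a sum of `h` nonzero elements of `S`. -/
noncomputable def ordS (S : Set ℕ) (s : ℕ) : ℕ :=
  sSup {h : ℕ | ∃ f : Fin h → ℕ, (∀ j, f j ∈ S ∧ f j ≠ 0) ∧ ∑ j, f j = s}

/-- `g` generates `S`. -/
def Generates (S : Set ℕ) {ν : ℕ} (g : Fin ν → ℕ) : Prop :=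
  ∀ s, s ∈ S ↔ ∃ lam : Fin ν → ℕ, ∑ i, lam i * g i = s

/-- `g` is a minimal generating system of `S`: it generates `S`
and no `g i` is generated by the remaining generators. -/
def MinimalGen (S : Set ℕ) {ν : ℕ} (g : Fin ν → ℕ) : Prop :=
  Generates S g ∧ ∀ i, ¬ ∃ lam : Fin ν → ℕ, lam i = 0 ∧ ∑ j, lam j * g j = g i

/-- `lam` is a maximal representation of `s`: the coefficient sum equals `ordS S s`. -/
def IsMaxRep (S : Set ℕ) {ν : ℕ} (g : Fin ν → ℕ) (lam : Fin ν → ℕ) (s : ℕ) : Prop :=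
  ∑ i, lam i * g i = s ∧ ∑ i, lam i = ordS S s

/-- `s` has a unique maximal representation. -/
def UniqueMaxRep (S : Set ℕ) {ν : ℕ} (g : Fin ν → ℕ) (s : ℕ) : Prop :=
  ∃! lam : Fin ν → ℕ, IsMaxRep S g lam s

/-- `β_i = max {h | h g_i ∈ Ap(S) and ord(h g_i) = h}`. -/
noncomputable def betaN (S : Set ℕ) (m : ℕ) {ν : ℕ} (g : Fin ν → ℕ) (i : Fin ν) : ℕ :=
  sSup {h : ℕ | InApery S m (h * g i) ∧ ordS S (h * g i) = h}

/-- `γ_i = max {h | h g_i ∈ Ap(S), ord(h g_i) = h and h g_i has a unique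
maximal representation}`. -/
noncomputable def gammaN (S : Set ℕ) (m : ℕ) {ν : ℕ} (g : Fin ν → ℕ) (i : Fin ν) : ℕ :=
  sSup {h : ℕ | InApery S m (h * g i) ∧ ordS S (h * g i) = h ∧ UniqueMaxRep S g (h * g i)}

/-- `B = {Σ_{i≥2} λ_i g_i : 0 ≤ λ_i ≤ β_i}`. -/
def Bset (S : Set ℕ) (m : ℕ) {ν : ℕ} [NeZero ν] (g : Fin ν → ℕ) : Set ℕ :=
  {s | ∃ lam : Fin ν → ℕ, lam 0 = 0 ∧ (∀ i, lam i ≤ betaN S m g i) ∧ ∑ i, lam i * g i = s}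

/-- `Γ = {Σ_{i≥2} λ_i g_i : 0 ≤ λ_i ≤ γ_i}`. -/
def GammaSet (S : Set ℕ) (m : ℕ) {ν : ℕ} [NeZero ν] (g : Fin ν → ℕ) : Set ℕ :=
  {s | ∃ lam : Fin ν → ℕ, lam 0 = 0 ∧ (∀ i, lam i ≤ gammaN S m g i) ∧ ∑ i, lam i * g i = s}

/-- `s ⪯_M t`. -/
def predM (S : Set ℕ) (s t : ℕ) : Prop :=
  ∃ u ∈ S, s + u = t ∧ ordS S s + ordS S u = ordS S t

/-!
Among the maximal representations `w = Σ λ_j g_j` of an Apéry element choose one maximising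
the quadratic weight `Σ λ_j g_j²`. Every block `λ_i g_i` is a summand of `w`, hence lies in
`Ap(S)`. Its order is `λ_i`: a longer representation of the block, exchanged into that of `w`,
would lengthen a maximal representation. Its maximal representation is unique: any other one has
the same length and the same value, so by strict convexity of `x ↦ x²` it has a larger quadratic
weight, and exchanging it in would produce a heavier maximal representation of `w`. Hence
`λ_i ≤ γ_i`, and `λ_1 = 0` because `w - g_1 ∉ S`.
-/

section Representations

variable {ν : ℕ}

lemma sum_single_mul (i : Fin ν) (c : ℕ) (f : Fin ν → ℕ) :
    ∑ j, (Pi.single i c : Fin ν → ℕ) j * f j = c * f i := by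
  simp [Pi.single_apply]

lemma update_zero_add_single (lam : Fin ν → ℕ) (i : Fin ν) :
    Function.update lam i 0 + Pi.single i (lam i) = lam := by
  ext j
  by_cases h : j = i <;> simp [h]

lemma sum_update_zero_mul_add (lam : Fin ν → ℕ) (i : Fin ν) (f : Fin ν → ℕ) :
    ∑ j, Function.update lam i 0 j * f j + lam i * f i = ∑ j, lam j * f j := by
  conv_rhs => rw [← update_zero_add_single lam i]
  simp only [Pi.add_apply, add_mul, sum_add_distrib, sum_single_mul]

lemma sum_update_zero_add_mul (lam mu : Fin ν → ℕ) (i : Fin ν) (f : Fin ν → ℕ) :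
    ∑ j, (Function.update lam i 0 + mu) j * f j + lam i * f i =
      ∑ j, lam j * f j + ∑ j, mu j * f j := by
  simp only [Pi.add_apply, add_mul, sum_add_distrib]
  rw [← sum_update_zero_mul_add lam i f]
  ring

lemma sum_update_zero_add (lam mu : Fin ν → ℕ) (i : Fin ν) :
    ∑ j, (Function.update lam i 0 + mu) j + lam i = ∑ j, lam j + ∑ j, mu j := by
  simpa using sum_update_zero_add_mul lam mu i 1

lemma mul_sq_lt_sum_mul_sq {g : Fin ν → ℕ} (hg : Function.Injective g) {mu : Fin ν → ℕ}
    {i : Fin ν} {c : ℕ} (hsum : ∑ j, mu j = c) (hmul : ∑ j, mu j * g j = c * g i)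
    (hne : mu ≠ Pi.single i c) :
    c * g i ^ 2 < ∑ j, mu j * g j ^ 2 := by
  obtain ⟨k, hki, hk⟩ : ∃ k, k ≠ i ∧ mu k ≠ 0 := by
    by_contra! h
    have hmu : mu = Pi.single i (mu i) := by
      ext j
      by_cases hj : j = i
      · subst hj; simp
      · simp [hj, h j hj]
    have hmui : mu i = c := by rw [← hsum, Fintype.sum_eq_single i h]
    exact hne (hmui ▸ hmu)
  have e1 : ∑ j, (mu j : ℤ) = c := by exact_mod_cast hsum
  have e2 : ∑ j, (mu j : ℤ) * g j = c * g i := by exact_mod_cast hmul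
  -- `g i` is the `mu`-mean of `g`, so the excess weight is a variance
  have hvar : ∑ j, (mu j : ℤ) * ((g j : ℤ) - g i) ^ 2 =
      ∑ j, (mu j : ℤ) * (g j : ℤ) ^ 2 - c * g i ^ 2 :=
    calc ∑ j, (mu j : ℤ) * ((g j : ℤ) - g i) ^ 2
        = ∑ j, ((mu j : ℤ) * (g j : ℤ) ^ 2 - 2 * g i * ((mu j : ℤ) * g j) + g i ^ 2 * mu j) :=
          sum_congr rfl fun j _ => by ring
      _ = ∑ j, (mu j : ℤ) * (g j : ℤ) ^ 2 - 2 * g i * ∑ j, (mu j : ℤ) * g j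
            + g i ^ 2 * ∑ j, (mu j : ℤ) := by
          rw [sum_add_distrib, sum_sub_distrib, ← mul_sum, ← mul_sum]
      _ = _ := by rw [e1, e2]; ring
  have hpos : 0 < ∑ j, (mu j : ℤ) * ((g j : ℤ) - g i) ^ 2 := by
    have hgk : (g k : ℤ) - g i ≠ 0 := sub_ne_zero.mpr (by exact_mod_cast hg.ne hki)
    have hmuk : (mu k : ℤ) ≠ 0 := by exact_mod_cast hk
    calc 0 < (mu k : ℤ) * ((g k : ℤ) - g i) ^ 2 := by positivity
      _ ≤ _ := single_le_sum (f := fun j => (mu j : ℤ) * ((g j : ℤ) - g i) ^ 2)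
          (fun j _ => by positivity) (mem_univ k)
  zify
  linarith

lemma finite_setOf_sum_mul_eq {g : Fin ν → ℕ} (hg : ∀ i, 0 < g i) (s : ℕ) :
    {lam : Fin ν → ℕ | ∑ i, lam i * g i = s}.Finite :=
  (Set.finite_Iic fun _ => s).subset fun lam hlam i =>
    calc lam i ≤ lam i * g i := Nat.le_mul_of_pos_right _ (hg i)
      _ ≤ ∑ j, lam j * g j := single_le_sum (f := fun j => lam j * g j)
          (fun _ _ => Nat.zero_le _) (mem_univ i)
      _ = s := hlam

end Representations

section Order

variable {S : Set ℕ}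

def IsSumOfNonzero (S : Set ℕ) (h s : ℕ) : Prop :=
  ∃ f : Fin h → ℕ, (∀ j, f j ∈ S ∧ f j ≠ 0) ∧ ∑ j, f j = s

lemma IsSumOfNonzero.le {h s : ℕ} (hs : IsSumOfNonzero S h s) : h ≤ s := by
  obtain ⟨f, hf, rfl⟩ := hs
  calc h = ∑ _j : Fin h, 1 := by simp
    _ ≤ ∑ j, f j := sum_le_sum fun j _ => Nat.one_le_iff_ne_zero.mpr (hf j).2

lemma bddAbove_isSumOfNonzero (s : ℕ) : BddAbove {h | IsSumOfNonzero S h s} :=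
  ⟨s, fun _ => IsSumOfNonzero.le⟩

lemma IsSumOfNonzero.le_ordS {h s : ℕ} (hs : IsSumOfNonzero S h s) : h ≤ ordS S s :=
  le_csSup (bddAbove_isSumOfNonzero s) hs

lemma IsSumOfNonzero.ordS {h s : ℕ} (hs : IsSumOfNonzero S h s) :
    IsSumOfNonzero S (ordS S s) s :=
  Nat.sSup_mem ⟨h, hs⟩ (bddAbove_isSumOfNonzero s)

lemma IsSumOfNonzero.add {h₁ s₁ h₂ s₂ : ℕ} (hs₁ : IsSumOfNonzero S h₁ s₁)
    (hs₂ : IsSumOfNonzero S h₂ s₂) : IsSumOfNonzero S (h₁ + h₂) (s₁ + s₂) := by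
  obtain ⟨f₁, hf₁, rfl⟩ := hs₁
  obtain ⟨f₂, hf₂, rfl⟩ := hs₂
  refine ⟨Fin.append f₁ f₂, Fin.addCases (by simpa using hf₁) (by simpa using hf₂), ?_⟩
  simp [Fin.sum_univ_add]

lemma isSumOfNonzero_mul {x : ℕ} (hx : x ∈ S) (hx0 : 0 < x) (c : ℕ) :
    IsSumOfNonzero S c (c * x) :=
  ⟨fun _ => x, fun _ => ⟨hx, hx0.ne'⟩, by simp⟩

lemma isSumOfNonzero_sum_mul {ν : ℕ} {g : Fin ν → ℕ} (hgS : ∀ i, g i ∈ S) (hg : ∀ i, 0 < g i)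
    (lam : Fin ν → ℕ) : IsSumOfNonzero S (∑ i, lam i) (∑ i, lam i * g i) := by
  classical
  suffices ∀ t : Finset (Fin ν), IsSumOfNonzero S (∑ i ∈ t, lam i) (∑ i ∈ t, lam i * g i) from
    this univ
  intro t
  induction t using Finset.induction_on with
  | empty => exact ⟨Fin.elim0, fun j => j.elim0, by simp⟩
  | insert a t ha ih =>
    rw [sum_insert ha, sum_insert ha]
    exact (isSumOfNonzero_mul (hgS a) (hg a) (lam a)).add ih

end Order

section MaximalRepresentations

variable {S : Set ℕ} {ν : ℕ} {g : Fin ν → ℕ}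

lemma Generates.sum_mul_mem (hgen : Generates S g) (lam : Fin ν → ℕ) : ∑ i, lam i * g i ∈ S :=
  (hgen _).2 ⟨lam, rfl⟩

lemma Generates.mul_mem (hgen : Generates S g) (c : ℕ) (i : Fin ν) : c * g i ∈ S := by
  simpa [sum_single_mul] using hgen.sum_mul_mem (Pi.single i c)

lemma Generates.mem (hgen : Generates S g) (i : Fin ν) : g i ∈ S := by
  simpa using hgen.mul_mem 1 i

lemma Generates.sum_le_ordS (hgen : Generates S g) (hg : ∀ i, 0 < g i) (lam : Fin ν → ℕ) :
    ∑ i, lam i ≤ ordS S (∑ i, lam i * g i) :=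
  (isSumOfNonzero_sum_mul hgen.mem hg lam).le_ordS

lemma Generates.exists_isMaxRep (hgen : Generates S g) (hg : ∀ i, 0 < g i) {s : ℕ}
    (hs : s ∈ S) : ∃ lam, IsMaxRep S g lam s := by
  obtain ⟨lam₀, rfl⟩ := (hgen s).1 hs
  obtain ⟨f, hf, hfs⟩ := (isSumOfNonzero_sum_mul hgen.mem hg lam₀).ordS
  choose L hL using fun j => (hgen (f j)).1 (hf j).1
  have hrep : ∑ i, (∑ j, L j i) * g i = ∑ i, lam₀ i * g i := by
    simp_rw [sum_mul]
    rw [sum_comm]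
    simpa only [hL] using hfs
  refine ⟨fun i => ∑ j, L j i, hrep, le_antisymm ?_ ?_⟩
  · simpa only [hrep] using hgen.sum_le_ordS hg (fun i => ∑ j, L j i)
  · have hL_pos : ∀ j, 1 ≤ ∑ i, L j i := fun j => by
      rw [Nat.one_le_iff_ne_zero]
      intro h0
      apply (hf j).2
      rw [← hL j]
      exact sum_eq_zero fun i _ => by rw [sum_eq_zero_iff.1 h0 i (mem_univ i), zero_mul]
    calc ordS S _ = ∑ _j : Fin (ordS S (∑ i, lam₀ i * g i)), 1 := by simp
      _ ≤ ∑ j, ∑ i, L j i := sum_le_sum fun j _ => hL_pos j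
      _ = ∑ i, ∑ j, L j i := sum_comm

lemma Generates.exists_isMaxRep_forall_sum_mul_sq_le (hgen : Generates S g) (hg : ∀ i, 0 < g i)
    {s : ℕ} (hs : s ∈ S) :
    ∃ lam, IsMaxRep S g lam s ∧
      ∀ mu, IsMaxRep S g mu s → ∑ j, mu j * g j ^ 2 ≤ ∑ j, lam j * g j ^ 2 :=
  Set.exists_max_image {lam | IsMaxRep S g lam s} (fun lam => ∑ j, lam j * g j ^ 2)
    ((finite_setOf_sum_mul_eq hg s).subset fun _ h => h.1) (hgen.exists_isMaxRep hg hs)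

lemma IsMaxRep.sum_update_zero_add_mul_eq {lam : Fin ν → ℕ} {s : ℕ} (hlam : IsMaxRep S g lam s)
    {i : Fin ν} {mu : Fin ν → ℕ} (hmu : ∑ j, mu j * g j = lam i * g i) :
    ∑ j, (Function.update lam i 0 + mu) j * g j = s := by
  have := sum_update_zero_add_mul lam mu i g
  rw [hlam.1, hmu] at this
  omega

lemma IsMaxRep.ordS_mul_apply (hgen : Generates S g) (hg : ∀ i, 0 < g i) {lam : Fin ν → ℕ}
    {s : ℕ} (hlam : IsMaxRep S g lam s) (i : Fin ν) : ordS S (lam i * g i) = lam i := by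
  refine le_antisymm ?_
    (by simpa [sum_single_mul] using hgen.sum_le_ordS hg (Pi.single i (lam i)))
  obtain ⟨mu, hmu, hmu_ord⟩ := hgen.exists_isMaxRep hg (hgen.mul_mem (lam i) i)
  have hle := hgen.sum_le_ordS hg (Function.update lam i 0 + mu)
  rw [hlam.sum_update_zero_add_mul_eq hmu, ← hlam.2] at hle
  have := sum_update_zero_add lam mu i
  omega

lemma IsMaxRep.uniqueMaxRep_mul_apply (hgen : Generates S g) (hg : ∀ i, 0 < g i)
    (hinj : Function.Injective g) {lam : Fin ν → ℕ} {s : ℕ} (hlam : IsMaxRep S g lam s)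
    (hheavy : ∀ mu, IsMaxRep S g mu s → ∑ j, mu j * g j ^ 2 ≤ ∑ j, lam j * g j ^ 2)
    (i : Fin ν) : UniqueMaxRep S g (lam i * g i) := by
  have hord := hlam.ordS_mul_apply hgen hg i
  refine ⟨Pi.single i (lam i), ⟨sum_single_mul i _ g, by simp [hord]⟩, fun mu hmu => ?_⟩
  by_contra hne
  have hlt := mul_sq_lt_sum_mul_sq hinj (hmu.2.trans hord) hmu.1 hne
  have hexch : IsMaxRep S g (Function.update lam i 0 + mu) s := by
    refine ⟨hlam.sum_update_zero_add_mul_eq hmu.1, ?_⟩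
    have := sum_update_zero_add lam mu i
    rw [hmu.2, hord, hlam.2] at this
    omega
  have hle := hheavy _ hexch
  have hweight := sum_update_zero_add_mul lam mu i (fun j => g j ^ 2)
  omega

end MaximalRepresentations

section Apery

variable {S : Set ℕ} {m : ℕ}

lemma InApery.of_add (hadd : ∀ a ∈ S, ∀ b ∈ S, a + b ∈ S) {a b : ℕ}
    (h : InApery S m (a + b)) (ha : a ∈ S) (hb : b ∈ S) : InApery S m b :=
  ⟨hb, fun u hu hum => h.2 (a + u) (hadd a ha u hu) (by omega)⟩

lemma bddAbove_aperySet (hfin : (Sᶜ : Set ℕ).Finite) (m : ℕ) : BddAbove (AperySet S m) := by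
  obtain ⟨N, hN⟩ := hfin.bddAbove
  refine ⟨N + m, fun s hs => ?_⟩
  by_contra! hlt
  have hsub : s - m ∈ S := by
    by_contra hsub
    have := hN hsub
    omega
  exact hs.2 _ hsub (by omega)

variable {ν : ℕ} {g : Fin ν → ℕ}

lemma InApery.mul_apply (hgen : Generates S g) (hadd : ∀ a ∈ S, ∀ b ∈ S, a + b ∈ S)
    {lam : Fin ν → ℕ} (h : InApery S m (∑ j, lam j * g j)) (i : Fin ν) :
    InApery S m (lam i * g i) := by
  rw [← sum_update_zero_mul_add lam i g] at h
  exact h.of_add hadd (hgen.sum_mul_mem _) (hgen.mul_mem _ i)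

lemma InApery.eq_zero_of_mul (hgen : Generates S g) {c : ℕ} {i : Fin ν}
    (h : InApery S (g i) (c * g i)) : c = 0 := by
  by_contra hc
  refine h.2 ((c - 1) * g i) (hgen.mul_mem _ i) ?_
  rw [Nat.sub_one_mul, Nat.sub_add_cancel (Nat.le_mul_of_pos_left _ (Nat.pos_of_ne_zero hc))]

lemma le_gammaN (hfin : (Sᶜ : Set ℕ).Finite) {i : Fin ν} (hgi : 0 < g i) {h : ℕ}
    (hh : InApery S m (h * g i) ∧ ordS S (h * g i) = h ∧ UniqueMaxRep S g (h * g i)) :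
    h ≤ gammaN S m g i := by
  obtain ⟨N, hN⟩ := bddAbove_aperySet hfin m
  exact le_csSup ⟨N, fun k hk => (Nat.le_mul_of_pos_right k hgi).trans (hN hk.1)⟩ hh

end Apery

theorem apery_subset_gammaSet_general (S : Set ℕ) {ν : ℕ} [NeZero ν] (g : Fin ν → ℕ)
    (hS : IsNumSgp S) (hgen : MinimalGen S g) (hmono : StrictMono g)
    (hmpos : 0 < g 0) :
    AperySet S (g 0) ⊆ GammaSet S (g 0) g := by
  have hg : ∀ i, 0 < g i := fun i => hmpos.trans_le (hmono.monotone (Fin.zero_le i))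
  intro w hw
  obtain ⟨lam, hlam, hheavy⟩ := hgen.1.exists_isMaxRep_forall_sum_mul_sq_le hg hw.1
  have hw' : InApery S (g 0) (∑ j, lam j * g j) := hlam.1 ▸ hw
  have hblock : ∀ i, InApery S (g 0) (lam i * g i) := hw'.mul_apply hgen.1 hS.2.1
  refine ⟨lam, (hblock 0).eq_zero_of_mul hgen.1, fun i => le_gammaN hS.2.2 (hg i) ?_, hlam.1⟩
  exact ⟨hblock i, hlam.ordS_mul_apply hgen.1 hg i,
    hlam.uniqueMaxRep_mul_apply hgen.1 hg hmono.injective hheavy i⟩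

theorem apery_subset_gammaSet (S : Set ℕ) {ν : ℕ} [NeZero ν] (g : Fin ν → ℕ) (hν : 2 ≤ ν)
    (hS : IsNumSgp S) (hgen : MinimalGen S g) (hmono : StrictMono g)
    (hmpos : 0 < g 0) (hmul : ∀ s ∈ S, s ≠ 0 → g 0 ≤ s) :
    AperySet S (g 0) ⊆ GammaSet S (g 0) g :=
  apery_subset_gammaSet_general S g hS hgen hmono hmpos
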